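/- arXiv:math/0406211 — 3 statements merged into one kernel-verified Lean document; each statement's English description precedes it below -/
import Mathlib

section
/- Let k be a field and Q a Dynkin quiver. Suppose N = ⊕_{s=1}^{ν} N_s is a representation with N_s supported on graded subspaces V_d^s of V_d, and suppose Hom_Q(N_t, N_s) = 0 for all 1 ≤ s < t ≤ ν. Then the restriction of φ : ξ ↦ (ξ_{h(α)} N_α − N_α ξ_{i(α)})_α to the strictly lower-triangular part u_d = ⊕_{s > t} ⊕_i Hom((V_d^s)_i, (V_d^t)_i) is injective. -/
/- STATEMENT 3: Setup: a graded decomposition `V_d = ⊕_{s=1}^{ν} V_d^s` encoded by complete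
orthogonal idempotents `e s i`, a block-diagonal representation `N` with blocks `N_s`, and the
hypothesis that `Hom_Q(N_t, N_s) = 0` for `s < t` (every morphism of representations supported
in the block mapping the `t`-th summand to the `s`-th summand vanishes). Then the restriction
of `φ : ξ ↦ (ξ_{h(α)} N_α − N_α ξ_{i(α)})_α` to the strictly lower triangular part
`u_d = ⊕_{s > t} ⊕_i Hom((V_d^s)_i, (V_d^t)_i)` is injective. -/
theorem phi_restricted_injective {k : Type} [Field k] {I A : Type} (src tgt : A → I)
    (d : I → ℕ) (ν : ℕ)
    (e : Fin ν → ∀ i : I, Matrix (Fin (d i)) (Fin (d i)) k)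
    (hcomplete : ∀ i, ∑ s : Fin ν, e s i = 1)
    (hidem : ∀ (s : Fin ν) (i : I), e s i * e s i = e s i)
    (horth : ∀ (s t : Fin ν) (i : I), s ≠ t → e s i * e t i = 0)
    (N : ∀ a : A, Matrix (Fin (d (tgt a))) (Fin (d (src a))) k)
    (hN : ∀ (a : A) (s t : Fin ν), s ≠ t → e t (tgt a) * N a * e s (src a) = 0)
    -- Hom_Q(N_t, N_s) = 0 for s < t
    (hHom : ∀ s t : Fin ν, s < t →
      ∀ f : ∀ i : I, Matrix (Fin (d i)) (Fin (d i)) k,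
        (∀ i, e s i * f i * e t i = f i) →
        (∀ a : A, f (tgt a) * N a = N a * f (src a)) → f = 0) :
    -- φ is injective on the strictly lower triangular subspace u_d
    ∀ ξ : ∀ i : I, Matrix (Fin (d i)) (Fin (d i)) k,
      (∀ (i : I) (s t : Fin ν), s ≤ t → e t i * ξ i * e s i = 0) →
      (∀ a : A, ξ (tgt a) * N a - N a * ξ (src a) = 0) → ξ = 0 := by
  intro ξ hlow hcomm
  -- N is block diagonal: e s (tgt a) * N a = N a * e s (src a)
  have hswap : ∀ (a : A) (s : Fin ν), e s (tgt a) * N a = N a * e s (src a) := by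
    intro a s
    have h1 : e s (tgt a) * N a = e s (tgt a) * N a * e s (src a) := by
      conv_lhs => rw [← Matrix.mul_one (e s (tgt a) * N a), ← hcomplete (src a)]
      rw [Matrix.mul_sum, Finset.sum_eq_single s]
      · intro r _ hr
        exact hN a r s hr
      · intro h; exact absurd (Finset.mem_univ s) h
    have h2 : N a * e s (src a) = e s (tgt a) * N a * e s (src a) := by
      conv_lhs => rw [← Matrix.one_mul (N a * e s (src a)), ← hcomplete (tgt a)]
      rw [Matrix.sum_mul, Finset.sum_eq_single s]
      · rw [Matrix.mul_assoc]
      · intro r _ hr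
        rw [← Matrix.mul_assoc]
        exact hN a s r hr.symm
      · intro h; exact absurd (Finset.mem_univ s) h
    rw [h1, h2]
  have hc : ∀ a : A, ξ (tgt a) * N a = N a * ξ (src a) := fun a => sub_eq_zero.mp (hcomm a)
  have key : ∀ (i : I) (t s : Fin ν), e t i * ξ i * e s i = 0 := by
    intro i t s
    by_cases h : s ≤ t
    · exact hlow i s t h
    · push_neg at h
      have hf := hHom t s h (fun j => e t j * ξ j * e s j)
        (by
          intro j
          calc e t j * (e t j * ξ j * e s j) * e s j
              = (e t j * e t j) * ξ j * (e s j * e s j) := by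
                simp only [mul_assoc]
            _ = e t j * ξ j * e s j := by rw [hidem, hidem])
        (by
          intro a
          calc e t (tgt a) * ξ (tgt a) * e s (tgt a) * N a
              = e t (tgt a) * ξ (tgt a) * (e s (tgt a) * N a) := by
                rw [Matrix.mul_assoc]
            _ = e t (tgt a) * ξ (tgt a) * (N a * e s (src a)) := by rw [hswap]
            _ = e t (tgt a) * (ξ (tgt a) * N a) * e s (src a) := by
                simp only [Matrix.mul_assoc]
            _ = e t (tgt a) * (N a * ξ (src a)) * e s (src a) := by rw [hc]
            _ = (e t (tgt a) * N a) * ξ (src a) * e s (src a) := by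
                simp only [Matrix.mul_assoc]
            _ = (N a * e t (src a)) * ξ (src a) * e s (src a) := by rw [hswap]
            _ = N a * (e t (src a) * ξ (src a) * e s (src a)) := by
                simp only [Matrix.mul_assoc])
      exact congrFun hf i
  funext i
  have h1 : ξ i = (∑ t : Fin ν, e t i) * ξ i * (∑ s : Fin ν, e s i) := by
    rw [hcomplete, one_mul, mul_one]
  rw [h1]
  simp [Finset.sum_mul, Finset.mul_sum, key]
end

section
/- Let k be a field, Q a finite quiver with opposite quiver Q^op, and d a dimension vector. Define the pairing ⟨(M_α), (N_{α*})⟩ = Σ_{α∈Q_1} Tr(M_α N_{α*}) on R_d(Q) × R_d(Q^op). For N ∈ R_d(Q), the orthogonal complement of the tangent space T_N(O_N) = {(ξ_{h(α)} N_α − N_α ξ_{i(α)})_α : ξ ∈ g_d} with respect to this pairing equals the fiber over N of the projection from the preprojective variety: {(f_{α*}) ∈ R_d(Q^op) : for all i ∈ I, Σ_{h(α)=i} f_{α*} N_α = Σ_{i(α)=i} N_α f_{α*}}. -/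
lemma trace_nondeg {k : Type} [Field k] {n : ℕ} (M : Matrix (Fin n) (Fin n) k)
    (h : ∀ E : Matrix (Fin n) (Fin n) k, Matrix.trace (E * M) = 0) : M = 0 := by
  ext p q
  have := h (Matrix.single q p 1)
  simpa [Matrix.trace, Matrix.mul_apply, Matrix.single, Matrix.diag,
    Finset.sum_ite_eq, ite_and] using this

lemma sum_dite_trace {k : Type} [Field k] {I : Type} [Fintype I] [DecidableEq I]
    (d : I → ℕ) (ξ : ∀ i : I, Matrix (Fin (d i)) (Fin (d i)) k)
    (j : I) (X : Matrix (Fin (d j)) (Fin (d j)) k) :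
    ∑ i : I, Matrix.trace (ξ i * (if h : j = i then (h ▸ X : Matrix (Fin (d i)) (Fin (d i)) k) else 0))
      = Matrix.trace (ξ j * X) := by
  rw [Finset.sum_eq_single j]
  · simp
  · intro i _ hi
    rw [dif_neg (Ne.symm hi)]
    simp
  · simp

lemma sum_dite_trace' {k : Type} [Field k] {I : Type} [Fintype I] [DecidableEq I]
    (d : I → ℕ) (M : ∀ i : I, Matrix (Fin (d i)) (Fin (d i)) k)
    (j : I) (E : Matrix (Fin (d j)) (Fin (d j)) k) :
    ∑ i : I, Matrix.trace ((if h : j = i then (h ▸ E : Matrix (Fin (d i)) (Fin (d i)) k) else 0) * M i)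
      = Matrix.trace (E * M j) := by
  rw [Finset.sum_eq_single j]
  · simp
  · intro i _ hi
    rw [dif_neg (Ne.symm hi)]
    simp
  · simp

theorem tangent_orthogonal_eq_preprojective_fiber {k : Type} [Field k]
    {I A : Type} [Fintype I] [Fintype A] [DecidableEq I]
    (src tgt : A → I) (d : I → ℕ)
    (N : ∀ a : A, Matrix (Fin (d (tgt a))) (Fin (d (src a))) k) :
    {f : ∀ a : A, Matrix (Fin (d (src a))) (Fin (d (tgt a))) k |
      ∀ T ∈ Set.range (fun ξ : ∀ i : I, Matrix (Fin (d i)) (Fin (d i)) k =>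
          (fun a : A => ξ (tgt a) * N a - N a * ξ (src a))),
        ∑ a : A, Matrix.trace (T a * f a) = 0}
    =
    {f : ∀ a : A, Matrix (Fin (d (src a))) (Fin (d (tgt a))) k |
      ∀ i : I,
        (∑ a : A, (if h : tgt a = i
            then (h ▸ (N a * f a) : Matrix (Fin (d i)) (Fin (d i)) k) else 0))
          = ∑ a : A, (if h : src a = i
              then (h ▸ (f a * N a) : Matrix (Fin (d i)) (Fin (d i)) k) else 0)} := by
  ext f
  simp only [Set.mem_setOf_eq, Set.forall_mem_range]
  set Ai : ∀ i : I, Matrix (Fin (d i)) (Fin (d i)) k := fun i => ∑ a : A, (if h : tgt a = i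
      then (h ▸ (N a * f a) : Matrix (Fin (d i)) (Fin (d i)) k) else 0) with hAi
  set Bi : ∀ i : I, Matrix (Fin (d i)) (Fin (d i)) k := fun i => ∑ a : A, (if h : src a = i
      then (h ▸ (f a * N a) : Matrix (Fin (d i)) (Fin (d i)) k) else 0) with hBi
  have key : ∀ ξ : ∀ i : I, Matrix (Fin (d i)) (Fin (d i)) k,
      ∑ a : A, Matrix.trace ((ξ (tgt a) * N a - N a * ξ (src a)) * f a)
        = ∑ i : I, Matrix.trace (ξ i * (Ai i - Bi i)) := by
    intro ξ
    have step1 : ∀ a : A, Matrix.trace ((ξ (tgt a) * N a - N a * ξ (src a)) * f a)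
        = Matrix.trace (ξ (tgt a) * (N a * f a)) - Matrix.trace (ξ (src a) * (f a * N a)) := by
      intro a
      rw [Matrix.sub_mul, Matrix.trace_sub, Matrix.mul_assoc]
      congr 1
      rw [Matrix.trace_mul_cycle, Matrix.trace_mul_comm]
    calc ∑ a : A, Matrix.trace ((ξ (tgt a) * N a - N a * ξ (src a)) * f a)
        = ∑ a : A, ∑ i : I,
            (Matrix.trace (ξ i * (if h : tgt a = i
                then (h ▸ (N a * f a) : Matrix (Fin (d i)) (Fin (d i)) k) else 0))
             - Matrix.trace (ξ i * (if h : src a = i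
                then (h ▸ (f a * N a) : Matrix (Fin (d i)) (Fin (d i)) k) else 0))) := by
          refine Finset.sum_congr rfl fun a _ => ?_
          rw [Finset.sum_sub_distrib, sum_dite_trace d ξ (tgt a) (N a * f a),
            sum_dite_trace d ξ (src a) (f a * N a), step1]
      _ = ∑ i : I, Matrix.trace (ξ i * (Ai i - Bi i)) := by
          rw [Finset.sum_comm]
          refine Finset.sum_congr rfl fun i _ => ?_
          rw [hAi, hBi, mul_sub, Matrix.trace_sub, Matrix.mul_sum, Matrix.mul_sum,
            Matrix.trace_sum, Matrix.trace_sum, Finset.sum_sub_distrib]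
  constructor
  · intro H i
    have h0 : ∀ E : Matrix (Fin (d i)) (Fin (d i)) k, Matrix.trace (E * (Ai i - Bi i)) = 0 := by
      intro E
      have h1 := (H (fun j => if h : i = j then (h ▸ E : Matrix (Fin (d j)) (Fin (d j)) k) else 0)).symm.trans
        (key (fun j => if h : i = j then (h ▸ E : Matrix (Fin (d j)) (Fin (d j)) k) else 0))
      rw [← sum_dite_trace' d (fun j => Ai j - Bi j) i E]
      exact h1.symm
    have := trace_nondeg _ h0
    exact sub_eq_zero.mp this
  · intro H ξ
    rw [key]
    have : ∀ i : I, Ai i - Bi i = 0 := fun i => sub_eq_zero.mpr (H i)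
    simp [this]
end

section
/- Let k be a finite field, Q a Dynkin quiver, and N ∈ R_d block-diagonal with blocks N_s satisfying Hom_Q(N_t, N_s) = 0 for s < t. Let U_d be the unipotent radical of the parabolic stabilizing the standard flag, acting on the affine space Y_N = N + Y_N^0 (representations compatible with the flag and inducing N_s on subquotients). If E_N is a complement of φ(u_d) in Y_N compatible with the block decomposition of R_d, then every U_d-orbit in Y_N meets E_N in exactly one point; in particular the U_d-action on Y_N is free and |E_N| = |Y_N|/|U_d|. -/
section QuiverRep

variable {k : Type} [Field k] {I A : Type} (src tgt : A → I)

/-- The space `R_d` of representations of the quiver `(I, A, src, tgt)` of dimension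
vector `d`, in coordinates. -/
abbrev CRep (k : Type) [Field k] (d : I → ℕ) : Type :=
  ∀ a : A, Matrix (Fin (d (tgt a))) (Fin (d (src a))) k

/-- The group `G_d = ∏_i GL_{d_i}(k)`. -/
abbrev Gd (k : Type) [Field k] (d : I → ℕ) : Type := ∀ i : I, GL (Fin (d i)) k

/-- The action of `G_d` on `R_d`: `(g·M)_α = g_{h(α)} M_α g_{i(α)}⁻¹`. -/
def gact {d : I → ℕ} (g : Gd k d) (M : CRep src tgt k d) : CRep src tgt k d :=
  fun a => (g (tgt a) : Matrix (Fin (d (tgt a))) (Fin (d (tgt a))) k) * M a *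
    (((g (src a))⁻¹ : GL (Fin (d (src a))) k) : Matrix (Fin (d (src a))) (Fin (d (src a))) k)

/-- The `G_d`-orbit `O_M` of `M` in `R_d`. -/
def orbit {d : I → ℕ} (M : CRep src tgt k d) : Set (CRep src tgt k d) :=
  Set.range (fun g : Gd k d => gact src tgt g M)

/-- `|Aut(M)| = |Stab_{G_d}(M)|`, the number of automorphisms of a representation. -/
noncomputable def autCard {d : I → ℕ} (M : CRep src tgt k d) : ℕ :=
  {g : Gd k d | gact src tgt g M = M}.ncard

/-- A family of graded subspaces is a subrepresentation of `M`. -/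
def IsSubrep {d : I → ℕ} (M : CRep src tgt k d)
    (W : ∀ i : I, Submodule k (Fin (d i) → k)) : Prop :=
  ∀ a : A, (W (src a)).map (M a).mulVecLin ≤ W (tgt a)

/-- The subrepresentation of `M` carried by an invariant family `W` is isomorphic, as a
representation of the quiver, to the coordinate representation `P` (of dim vector `d₂`). -/
def SubIsoTo {d d₂ : I → ℕ} (M : CRep src tgt k d)
    (W : ∀ i : I, Submodule k (Fin (d i) → k)) (P : CRep src tgt k d₂) : Prop :=
  ∃ g : ∀ i : I, ↥(W i) ≃ₗ[k] (Fin (d₂ i) → k),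
    ∀ (a : A) (x : ↥(W (src a))) (hx : (M a).mulVecLin ↑x ∈ W (tgt a)),
      g (tgt a) ⟨(M a).mulVecLin ↑x, hx⟩ = (P a).mulVecLin (g (src a) x)

/-- The quotient of `M` by an invariant family `W` is isomorphic, as a representation of the
quiver, to the coordinate representation `P` (of dim vector `d₂`). -/
def QuotIsoTo {d d₂ : I → ℕ} (M : CRep src tgt k d)
    (W : ∀ i : I, Submodule k (Fin (d i) → k)) (P : CRep src tgt k d₂) : Prop :=
  ∃ g : ∀ i : I, ((Fin (d i) → k) ⧸ W i) ≃ₗ[k] (Fin (d₂ i) → k),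
    ∀ (a : A) (x : Fin (d (src a)) → k),
      g (tgt a) (Submodule.Quotient.mk ((M a).mulVecLin x))
        = (P a).mulVecLin (g (src a) (Submodule.Quotient.mk x))

/-- Isomorphism of two coordinate representations (possibly of different dim vectors). -/
def CIso {d₁ d₂ : I → ℕ} (M₁ : CRep src tgt k d₁) (M₂ : CRep src tgt k d₂) : Prop :=
  ∃ g : ∀ i : I, (Fin (d₁ i) → k) ≃ₗ[k] (Fin (d₂ i) → k),
    ∀ (a : A) (x : Fin (d₁ (src a)) → k),
      g (tgt a) ((M₁ a).mulVecLin x) = (M₂ a).mulVecLin (g (src a) x)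

/-- `Fl` is a filtration `0 = M^ν ⊆ … ⊆ M^1 ⊆ M^0 = M` by subrepresentations whose
subquotients satisfy `M^s/M^{s+1} ≅ N_{s+1}` (where `Ns s` here denotes `N_{s+1}`). -/
def IsFiltrationOfType {d : I → ℕ} (M : CRep src tgt k d) (ν : ℕ) (ds : ℕ → I → ℕ)
    (Ns : ∀ s : ℕ, CRep src tgt k (ds s))
    (Fl : ℕ → ∀ i : I, Submodule k (Fin (d i) → k)) : Prop :=
  (∀ i, Fl 0 i = ⊤) ∧ (∀ i, Fl ν i = ⊥) ∧
  (∀ (s : ℕ) (i : I), Fl (s + 1) i ≤ Fl s i) ∧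
  (∀ s : ℕ, IsSubrep src tgt M (Fl s)) ∧
  (∀ s : ℕ, s < ν →
    ∃ g : ∀ i : I,
        (↥(Fl s i) ⧸ (Fl (s + 1) i).comap (Fl s i).subtype) ≃ₗ[k] (Fin (ds s i) → k),
      ∀ (a : A) (x : ↥(Fl s (src a))) (hx : (M a).mulVecLin ↑x ∈ Fl s (tgt a)),
        g (tgt a) (Submodule.Quotient.mk ⟨(M a).mulVecLin ↑x, hx⟩)
          = (Ns s a).mulVecLin (g (src a) (Submodule.Quotient.mk x)))

/-- The set of filtrations of `M` of type `(N_ν, …, N_1)`. -/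
def filtSet {d : I → ℕ} (M : CRep src tgt k d) (ν : ℕ) (ds : ℕ → I → ℕ)
    (Ns : ∀ s : ℕ, CRep src tgt k (ds s)) :
    Set (ℕ → ∀ i : I, Submodule k (Fin (d i) → k)) :=
  {Fl | IsFiltrationOfType src tgt M ν ds Ns Fl}

/-- A representation is indecomposable: it is nonzero, and any decomposition of the underlying
graded space into two complementary subrepresentations is trivial. -/
def IndecompRep {d : I → ℕ} (M : CRep src tgt k d) : Prop :=
  (∃ i, d i ≠ 0) ∧
  ∀ W₁ W₂ : ∀ i : I, Submodule k (Fin (d i) → k),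
    IsSubrep src tgt M W₁ → IsSubrep src tgt M W₂ → (∀ i, IsCompl (W₁ i) (W₂ i)) →
      (∀ i, W₁ i = ⊥) ∨ (∀ i, W₂ i = ⊥)

/-- `M` is isomorphic to the `m`-th power `P^{⊕ m}` of the representation `P`. -/
def IsoToPower {d dP : I → ℕ} (M : CRep src tgt k d) (P : CRep src tgt k dP) (m : ℕ) : Prop :=
  ∃ g : ∀ i : I, (Fin (d i) → k) ≃ₗ[k] (Fin m → Fin (dP i) → k),
    ∀ (a : A) (x : Fin (d (src a)) → k) (j : Fin m),
      g (tgt a) ((M a).mulVecLin x) j = (P a).mulVecLin (g (src a) x j)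

/-- `N` is isomorphic to the direct sum `⊕_{s} N_s` of the representations `Ns s`. -/
def IsoToDirectSum {d : I → ℕ} (N : CRep src tgt k d) (ν : ℕ) (ds : ℕ → I → ℕ)
    (Ns : ∀ s : ℕ, CRep src tgt k (ds s)) : Prop :=
  ∃ g : ∀ i : I, (Fin (d i) → k) ≃ₗ[k] (∀ s : Fin ν, Fin (ds s i) → k),
    ∀ (a : A) (x : Fin (d (src a)) → k) (s : Fin ν),
      g (tgt a) ((N a).mulVecLin x) s = (Ns s a).mulVecLin (g (src a) x s)

end QuiverRep

/-!
Filter `𝔤_d` and `R_d` by block degree, the block `(t, s)` having degree `s - t`, so that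
`𝔲_d` is the part of degree `≥ 1` and `U_d = 1 + 𝔲_d`. Let `u = 1 + η ∈ U_d` map `Q ∈ E_N` to
`Q' ∈ E_N`, with `η` of degree `≥ r ≥ 1`. The degree-`r` part of `Q - Q'` is `-φ(η_r)`, and it
lies in `E_N - N` because `E_N` is graded; since `E_N` is a complement of `φ(𝔲_d)` it vanishes,
and then `η_r = 0` because `φ` is injective on `𝔲_d` (this is where `Hom(N_t, N_s) = 0` for
`s < t` enters). Hence `η = 0`, i.e. `(Q, u) ↦ u⁻¹ Q` is injective on `E_N × U_d`. Over a finite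
field it is then bijective onto `Y_N` by counting: `(Q, ξ) ↦ Q + φ(ξ)` is a bijection
`E_N × 𝔲_d → Y_N`, and `ξ ↦ 1 + ξ` is a bijection `𝔲_d → U_d` as `𝔲_d` consists of nilpotents.
-/

open Finset

def Submonoid.toSubgroupOfFinite {G : Type*} [Group G] [Finite G] (S : Submonoid G) :
    Subgroup G where
  toSubmonoid := S
  inv_mem' {u} hu := Submonoid.powers_le.2 hu <|
    mem_powers_iff_mem_zpowers.2 (inv_mem (Subgroup.mem_zpowers u))

section SliceOfAction

variable {G X : Type*} [Group G] [MulAction G X] {U : Subgroup G} {E Y : Set X}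

theorem eq_of_smul_mem_of_smul_mem (hrigid : ∀ u ∈ U, ∀ Q ∈ E, u • Q ∈ E → u = 1)
    {P : X} {u u' : G} (hu : u ∈ U) (hu' : u' ∈ U) (hP : u • P ∈ E) (hP' : u' • P ∈ E) :
    u = u' := by
  have h := hrigid (u' * u⁻¹) (mul_mem hu' (inv_mem hu)) _ hP (by rwa [mul_smul, inv_smul_smul])
  exact (mul_inv_eq_one.1 h).symm

theorem existsUnique_smul_mem_of_ncard_le (hY : Y.Finite) (hEY : E ⊆ Y)
    (hUY : ∀ u ∈ U, ∀ P ∈ Y, u • P ∈ Y) (hrigid : ∀ u ∈ U, ∀ Q ∈ E, u • Q ∈ E → u = 1)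
    (hcard : Y.ncard ≤ E.ncard * (U : Set G).ncard) :
    (∀ P ∈ Y, ∃! Q, Q ∈ E ∧ ∃ u ∈ U, u • P = Q) ∧
      ∀ u ∈ U, ∀ P ∈ Y, u • P = P → u = 1 := by
  set F : X × G → X := fun p => p.2⁻¹ • p.1
  have hinj : Set.InjOn F (E ×ˢ U) := by
    rintro ⟨Q, u⟩ ⟨hQ, hu⟩ ⟨Q', u'⟩ ⟨hQ', hu'⟩ h
    obtain rfl : u = u' := eq_of_smul_mem_of_smul_mem hrigid (P := F (Q, u)) hu hu'
      (by simpa [F] using hQ) (by simpa [F, h] using hQ')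
    simpa [F] using h
  have himage : F '' (E ×ˢ U) = Y := by
    refine Set.eq_of_subset_of_ncard_le ?_ ?_ hY
    · rintro _ ⟨⟨Q, u⟩, ⟨hQ, hu⟩, rfl⟩
      exact hUY _ (inv_mem hu) Q (hEY hQ)
    · rwa [hinj.ncard_image, Set.ncard_prod]
  have hexists : ∀ P ∈ Y, ∃ u ∈ U, u • P ∈ E := by
    rintro P hP
    rw [← himage] at hP
    obtain ⟨⟨Q, u⟩, ⟨hQ, hu⟩, rfl⟩ := hP
    exact ⟨u, hu, by simpa [F] using hQ⟩
  refine ⟨fun P hP => ?_, fun u hu P hP hfix => ?_⟩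
  · obtain ⟨u, hu, huP⟩ := hexists P hP
    refine ⟨u • P, ⟨huP, u, hu, rfl⟩, ?_⟩
    rintro _ ⟨hQ', u', hu', rfl⟩
    rw [eq_of_smul_mem_of_smul_mem hrigid hu hu' huP hQ']
  · obtain ⟨v, hv, hvP⟩ := hexists P hP
    have h := eq_of_smul_mem_of_smul_mem hrigid (mul_mem hv hu) hv
      (by rwa [mul_smul, hfix]) hvP
    simpa using h

end SliceOfAction

/-- `1 = f 0 + ⋯ + f (ν - 1)` with all `f t` orthogonal idempotents; hence `f t = 0` for
`t ≥ ν`. -/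
structure IsBlockDecomp {S : Type*} [Ring S] (ν : ℕ) (f : ℕ → S) : Prop
    extends OrthogonalIdempotents f where
  sum_range : ∑ s ∈ range ν, f s = 1

theorem IsBlockDecomp.eq_zero_of_le {S : Type*} [Ring S] {ν : ℕ} {f : ℕ → S}
    (hf : IsBlockDecomp ν f) {t : ℕ} (ht : ν ≤ t) : f t = 0 := by
  rw [← mul_one (f t), ← hf.sum_range, mul_sum]
  exact sum_eq_zero fun s hs => hf.ortho (by rw [mem_range] at hs; omega)

namespace Matrix

variable {R : Type*} [Ring R] {l m n : Type*} [Fintype l] [Fintype m] [Fintype n]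
  {ν r q : ℕ} {f : ℕ → Matrix l l R} {g : ℕ → Matrix m m R} {h : ℕ → Matrix n n R}

def blockFilt (f : ℕ → Matrix l l R) (g : ℕ → Matrix m m R) (r : ℕ) :
    AddSubgroup (Matrix l m R) where
  carrier := {X | ∀ s t, s < t + r → f t * X * g s = 0}
  add_mem' hX hY s t hst := by
    rw [Matrix.mul_add, Matrix.add_mul, hX s t hst, hY s t hst, add_zero]
  zero_mem' s t _ := by rw [Matrix.mul_zero, Matrix.zero_mul]
  neg_mem' hX s t hst := by rw [Matrix.mul_neg, Matrix.neg_mul, hX s t hst, neg_zero]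

theorem mem_blockFilt {X : Matrix l m R} :
    X ∈ blockFilt f g r ↔ ∀ s t, s < t + r → f t * X * g s = 0 := Iff.rfl

theorem blockFilt_antitone : Antitone (blockFilt (R := R) f g) :=
  fun _ _ hrr' _ hX s t hst => hX s t (by omega)

theorem mul_mem_blockFilt [DecidableEq m] (hg : IsBlockDecomp ν g) {X : Matrix l m R}
    {Y : Matrix m n R} (hX : X ∈ blockFilt f g r) (hY : Y ∈ blockFilt g h q) :
    X * Y ∈ blockFilt f h (r + q) := by
  have hXY : X * Y = ∑ j ∈ range ν, X * g j * (g j * Y) :=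
    calc X * Y = X * (∑ j ∈ range ν, g j * g j) * Y := by
          simp only [(hg.idem _).eq, hg.sum_range, Matrix.mul_one]
      _ = _ := by simp only [Matrix.mul_sum, Matrix.sum_mul, Matrix.mul_assoc]
  intro s t hst
  rw [hXY, Matrix.mul_sum, Matrix.sum_mul]
  refine sum_eq_zero fun j _ => ?_
  rw [show f t * (X * g j * (g j * Y)) * h s = f t * X * g j * (g j * Y * h s) by
    simp only [Matrix.mul_assoc]]
  rcases lt_or_ge j (t + r) with hj | hj
  · rw [hX j t hj, Matrix.zero_mul]
  · rw [hY s j (by omega), Matrix.mul_zero]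

theorem eq_zero_of_mem_blockFilt [DecidableEq l] [DecidableEq m] (hf : IsBlockDecomp ν f)
    (hg : IsBlockDecomp ν g) {X : Matrix l m R} (hX : X ∈ blockFilt f g ν) : X = 0 :=
  calc X = (∑ t ∈ range ν, f t) * X * ∑ s ∈ range ν, g s := by
        rw [hf.sum_range, hg.sum_range, Matrix.one_mul, Matrix.mul_one]
    _ = ∑ s ∈ range ν, ∑ t ∈ range ν, f t * X * g s := by
        simp only [Matrix.sum_mul, Matrix.mul_sum]
    _ = 0 := sum_eq_zero fun s hs => sum_eq_zero fun _ _ =>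
        hX s _ (by rw [mem_range] at hs; omega)

theorem mul_eq_mul_of_block_eq_zero [DecidableEq l] [DecidableEq m] (hf : IsBlockDecomp ν f)
    (hg : IsBlockDecomp ν g) {X : Matrix l m R} (hX : ∀ s t, s ≠ t → f t * X * g s = 0)
    (s : ℕ) : f s * X = X * g s :=
  calc f s * X = ∑ t ∈ range ν, f s * X * g t := by
        rw [← Matrix.mul_sum, hg.sum_range, Matrix.mul_one]
    _ = ∑ t ∈ range ν, f t * X * g s := sum_congr rfl fun t _ => by
        rcases eq_or_ne s t with rfl | hst
        · rfl
        · rw [hX t s hst.symm, hX s t hst]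
    _ = X * g s := by rw [← Matrix.sum_mul, ← Matrix.sum_mul, hf.sum_range, Matrix.one_mul]

def blockProj (ν r : ℕ) (f : ℕ → Matrix l l R) (g : ℕ → Matrix m m R) :
    Matrix l m R →+ Matrix l m R :=
  AddMonoidHom.mk' (fun X => ∑ t ∈ range ν, f t * X * g (t + r)) fun X Y => by
    simp only [Matrix.mul_add, Matrix.add_mul, sum_add_distrib]

theorem blockProj_apply (X : Matrix l m R) :
    blockProj ν r f g X = ∑ t ∈ range ν, f t * X * g (t + r) := rfl

theorem mul_blockProj [DecidableEq l] (hf : IsBlockDecomp ν f) (X : Matrix l m R) (t : ℕ) :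
    f t * blockProj ν r f g X = f t * X * g (t + r) := by
  rcases lt_or_ge t ν with ht | ht
  · rw [blockProj_apply, Matrix.mul_sum, sum_eq_single_of_mem t (mem_range.2 ht)]
    · rw [← Matrix.mul_assoc, ← Matrix.mul_assoc, (hf.idem t).eq]
    · intro t' _ ht'
      rw [← Matrix.mul_assoc, ← Matrix.mul_assoc, hf.ortho ht'.symm, Matrix.zero_mul,
        Matrix.zero_mul]
  · rw [hf.eq_zero_of_le ht, Matrix.zero_mul, Matrix.zero_mul, Matrix.zero_mul]

theorem blockProj_mem [DecidableEq l] [DecidableEq m] (hf : IsBlockDecomp ν f)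
    (hg : OrthogonalIdempotents g) (X : Matrix l m R) : blockProj ν r f g X ∈ blockFilt f g r := by
  intro s t hst
  rw [mul_blockProj hf, Matrix.mul_assoc, hg.ortho (by omega), Matrix.mul_zero]

theorem sub_blockProj_mem [DecidableEq l] [DecidableEq m] (hf : IsBlockDecomp ν f)
    (hg : OrthogonalIdempotents g) {X : Matrix l m R} (hX : X ∈ blockFilt f g r) :
    X - blockProj ν r f g X ∈ blockFilt f g (r + 1) := by
  intro s t hst
  rw [Matrix.mul_sub, Matrix.sub_mul, mul_blockProj hf, Matrix.mul_assoc _ (g (t + r))]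
  rcases lt_or_ge s (t + r) with hs | hs
  · rw [hX s t hs, hg.ortho (by omega), Matrix.mul_zero, sub_zero]
  · obtain rfl : s = t + r := by omega
    rw [(hg.idem _).eq, sub_self]

theorem blockProj_eq_zero {X : Matrix l m R} (hX : X ∈ blockFilt f g (r + 1)) :
    blockProj ν r f g X = 0 := by
  rw [blockProj_apply]
  exact sum_eq_zero fun t _ => hX (t + r) t (by omega)

theorem blockProj_mul {X : Matrix l m R} {M : Matrix m n R} (hM : ∀ s, g s * M = M * h s) :
    blockProj ν r f h (X * M) = blockProj ν r f g X * M := by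
  simp only [blockProj_apply, Matrix.sum_mul, Matrix.mul_assoc, hM]

theorem blockProj_mul_left [DecidableEq l] {M : Matrix l m R} {Y : Matrix m n R}
    (hM : ∀ s, f s * M = M * g s) :
    blockProj ν r f h (M * Y) = M * blockProj ν r g h Y := by
  simp only [blockProj_apply, Matrix.mul_sum, ← Matrix.mul_assoc, hM]

end Matrix

/-- `𝔤_d = Lie(G_d)`. -/
abbrev LieGd (k : Type) [Field k] {I : Type} (d : I → ℕ) : Type :=
  ∀ i : I, Matrix (Fin (d i)) (Fin (d i)) k

section Quiver

variable {k : Type} [Field k] {I A : Type} {src tgt : A → I} {d : I → ℕ}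
  {e : ℕ → LieGd k d} {ν r q : ℕ} {N : CRep src tgt k d} {E : Set (CRep src tgt k d)}

def glFilt (e : ℕ → LieGd k d) (r : ℕ) : AddSubgroup (LieGd k d) where
  carrier := {ξ | ∀ i, ξ i ∈ Matrix.blockFilt (e · i) (e · i) r}
  add_mem' hξ hη i := add_mem (hξ i) (hη i)
  zero_mem' _ := zero_mem _
  neg_mem' hξ i := neg_mem (hξ i)

def repFilt (src tgt : A → I) (e : ℕ → LieGd k d) (r : ℕ) : AddSubgroup (CRep src tgt k d) where
  carrier := {P | ∀ a, P a ∈ Matrix.blockFilt (e · (tgt a)) (e · (src a)) r}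
  add_mem' hP hQ a := add_mem (hP a) (hQ a)
  zero_mem' _ := zero_mem _
  neg_mem' hP a := neg_mem (hP a)

/-- `𝔲_d = Lie(U_d)`. -/
def lieU (e : ℕ → LieGd k d) : Set (LieGd k d) :=
  {ξ | ∀ (i : I) (s t : ℕ), s ≤ t → e t i * ξ i * e s i = 0}

/-- `Y_N`. -/
def flagReps (e : ℕ → LieGd k d) (N : CRep src tgt k d) : Set (CRep src tgt k d) :=
  {P | ∀ (a : A) (s t : ℕ), s ≤ t → e t (tgt a) * (P a - N a) * e s (src a) = 0}

def IsBlockDiag (e : ℕ → LieGd k d) (N : CRep src tgt k d) : Prop :=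
  ∀ (a : A) (s t : ℕ), s ≠ t → e t (tgt a) * N a * e s (src a) = 0

def phi (N : CRep src tgt k d) : LieGd k d →+ CRep src tgt k d :=
  AddMonoidHom.mk' (fun ξ a => ξ (tgt a) * N a - N a * ξ (src a)) fun ξ η => by
    funext a
    simp only [Pi.add_apply, Matrix.add_mul, Matrix.mul_add]
    abel

def glProj (ν r : ℕ) (e : ℕ → LieGd k d) : LieGd k d →+ LieGd k d :=
  AddMonoidHom.pi fun i => (Matrix.blockProj ν r (e · i) (e · i)).comp (Pi.evalAddMonoidHom _ i)

def repProj (src tgt : A → I) (ν r : ℕ) (e : ℕ → LieGd k d) :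
    CRep src tgt k d →+ CRep src tgt k d :=
  AddMonoidHom.pi fun a =>
    (Matrix.blockProj ν r (e · (tgt a)) (e · (src a))).comp (Pi.evalAddMonoidHom _ a)

theorem mem_glFilt {ξ : LieGd k d} :
    ξ ∈ glFilt e r ↔ ∀ (i : I) (s t : ℕ), s < t + r → e t i * ξ i * e s i = 0 := Iff.rfl

theorem mem_repFilt {P : CRep src tgt k d} : P ∈ repFilt src tgt e r ↔
    ∀ (a : A) (s t : ℕ), s < t + r → e t (tgt a) * P a * e s (src a) = 0 := Iff.rfl

theorem mem_lieU_iff {ξ : LieGd k d} : ξ ∈ lieU e ↔ ξ ∈ glFilt e 1 := by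
  simp only [mem_glFilt, Nat.lt_add_one_iff]
  rfl

theorem mem_flagReps_iff {P : CRep src tgt k d} :
    P ∈ flagReps e N ↔ P - N ∈ repFilt src tgt e 1 := by
  simp only [mem_repFilt, Nat.lt_add_one_iff]
  rfl

theorem phi_apply (N : CRep src tgt k d) (ξ : LieGd k d) (a : A) :
    phi N ξ a = ξ (tgt a) * N a - N a * ξ (src a) := rfl

theorem glFilt_antitone : Antitone (glFilt e) :=
  fun _ _ hrr' _ hξ i => Matrix.blockFilt_antitone hrr' (hξ i)

section BlockCalculus

variable (he : ∀ i, IsBlockDecomp ν (e · i))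
include he

theorem one_mem_glFilt_zero : 1 ∈ glFilt e 0 :=
  fun i s t hst => by rw [Pi.one_apply, Matrix.mul_one]; exact (he i).ortho (by omega)

theorem mul_mem_glFilt {ξ η : LieGd k d} (hξ : ξ ∈ glFilt e r) (hη : η ∈ glFilt e q) :
    ξ * η ∈ glFilt e (r + q) :=
  fun i => Matrix.mul_mem_blockFilt (he i) (hξ i) (hη i)

theorem pow_mem_glFilt {η : LieGd k d} (hη : η ∈ glFilt e 1) (j : ℕ) : η ^ j ∈ glFilt e j := by
  induction j with
  | zero => exact one_mem_glFilt_zero he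
  | succ j ih => rw [pow_succ]; exact mul_mem_glFilt he ih hη

theorem lmul_mem_repFilt {ξ : LieGd k d} {P : CRep src tgt k d} (hξ : ξ ∈ glFilt e r)
    (hP : P ∈ repFilt src tgt e q) : (fun a => ξ (tgt a) * P a) ∈ repFilt src tgt e (r + q) :=
  fun a => Matrix.mul_mem_blockFilt (he _) (hξ _) (hP a)

theorem rmul_mem_repFilt {ξ : LieGd k d} {P : CRep src tgt k d} (hP : P ∈ repFilt src tgt e q)
    (hξ : ξ ∈ glFilt e r) : (fun a => P a * ξ (src a)) ∈ repFilt src tgt e (q + r) :=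
  fun a => Matrix.mul_mem_blockFilt (he _) (hP a) (hξ _)

theorem eq_zero_of_mem_glFilt {ξ : LieGd k d} (hξ : ξ ∈ glFilt e ν) : ξ = 0 :=
  funext fun i => Matrix.eq_zero_of_mem_blockFilt (he i) (he i) (hξ i)

theorem glProj_mem (ξ : LieGd k d) : glProj ν r e ξ ∈ glFilt e r :=
  fun i => Matrix.blockProj_mem (he i) (he i).toOrthogonalIdempotents (ξ i)

theorem sub_glProj_mem {ξ : LieGd k d} (hξ : ξ ∈ glFilt e r) :
    ξ - glProj ν r e ξ ∈ glFilt e (r + 1) :=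
  fun i => Matrix.sub_blockProj_mem (he i) (he i).toOrthogonalIdempotents (hξ i)

end BlockCalculus

theorem repProj_eq_zero {P : CRep src tgt k d} (hP : P ∈ repFilt src tgt e (r + 1)) :
    repProj src tgt ν r e P = 0 :=
  funext fun a => Matrix.blockProj_eq_zero (hP a)

section BlockDiag

variable (he : ∀ i, IsBlockDecomp ν (e · i)) (hN : IsBlockDiag e N)
include he hN

theorem IsBlockDiag.mul_comm (a : A) (s : ℕ) : e s (tgt a) * N a = N a * e s (src a) :=
  Matrix.mul_eq_mul_of_block_eq_zero (he _) (he _) (hN a) s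

theorem phi_mem_repFilt {ξ : LieGd k d} (hξ : ξ ∈ glFilt e r) : phi N ξ ∈ repFilt src tgt e r := by
  have hN0 : N ∈ repFilt src tgt e 0 := fun a s t hst => hN a s t (by omega)
  exact sub_mem (lmul_mem_repFilt he hξ hN0) (zero_add r ▸ rmul_mem_repFilt he hN0 hξ)

theorem repProj_phi (ξ : LieGd k d) :
    repProj src tgt ν r e (phi N ξ) = phi N (glProj ν r e ξ) := by
  funext a
  simp only [repProj, glProj, AddMonoidHom.pi_apply, AddMonoidHom.comp_apply,
    Pi.evalAddMonoidHom_apply, phi_apply, map_sub]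
  rw [Matrix.blockProj_mul (hN.mul_comm he a), Matrix.blockProj_mul_left (hN.mul_comm he a)]

theorem injOn_phi (hdir : ∀ s t : ℕ, s < t → ∀ f : LieGd k d, (∀ i, e s i * f i * e t i = f i) →
      (∀ a : A, f (tgt a) * N a = N a * f (src a)) → f = 0) :
    Set.InjOn (phi N) (glFilt e 1) := by
  suffices h0 : ∀ η ∈ glFilt e 1, phi N η = 0 → η = 0 from fun ξ hξ ξ' hξ' h =>
    sub_eq_zero.1 (h0 _ (sub_mem hξ hξ') (by rw [map_sub, h, sub_self]))
  intro η hη hφ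
  have hcomm : ∀ a, η (tgt a) * N a = N a * η (src a) := fun a => sub_eq_zero.1 (congrFun hφ a)
  refine eq_zero_of_mem_glFilt he fun i s t _ => ?_
  rcases le_or_gt s t with hst | hts
  · exact hη i s t (Nat.lt_add_one_iff.2 hst)
  -- for `t < s` the `(t, s)` block of `η` is a morphism `N_s → N_t`
  refine congrFun (hdir t s hts (fun j => e t j * η j * e s j) (fun j => ?_) (fun a => ?_)) i
  · rw [← Matrix.mul_assoc, ← Matrix.mul_assoc, ((he j).idem t).eq, Matrix.mul_assoc _ (e s j),
      ((he j).idem s).eq]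
  · calc e t (tgt a) * η (tgt a) * e s (tgt a) * N a
        = e t (tgt a) * (η (tgt a) * N a) * e s (src a) := by
          simp only [Matrix.mul_assoc, hN.mul_comm he]
      _ = e t (tgt a) * (N a * η (src a)) * e s (src a) := by rw [hcomm a]
      _ = N a * (e t (src a) * η (src a) * e s (src a)) := by
          simp only [← Matrix.mul_assoc, hN.mul_comm he]

end BlockDiag

def toLieGd (u : Gd k d) : LieGd k d := fun i => (u i : Matrix (Fin (d i)) (Fin (d i)) k)

def nilPart (u : Gd k d) : LieGd k d := toLieGd u - 1

theorem nilPart_one : nilPart (1 : Gd k d) = 0 :=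
  funext fun _ => sub_self _

theorem nilPart_mul (u v : Gd k d) :
    nilPart (u * v) = nilPart u * nilPart v + nilPart u + nilPart v := by
  funext i
  simp only [nilPart, toLieGd, Pi.sub_apply, Pi.mul_apply, Pi.add_apply, Pi.one_apply,
    Units.val_mul]
  noncomm_ring

theorem nilPart_injective : Function.Injective (nilPart : Gd k d → LieGd k d) :=
  fun _ _ h => funext fun i => Units.ext (sub_left_injective (congrFun h i))

/-- The unipotent radical `U_d` of the parabolic subgroup stabilising the flag. -/
def unipotent [Finite k] [Finite I] (he : ∀ i, IsBlockDecomp ν (e · i)) : Subgroup (Gd k d) :=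
  Submonoid.toSubgroupOfFinite
    { carrier := {u | nilPart u ∈ lieU e}
      one_mem' := by
        show nilPart 1 ∈ lieU e
        rw [nilPart_one, mem_lieU_iff]
        exact zero_mem _
      mul_mem' := fun {u v} (hu : nilPart u ∈ lieU e) (hv : nilPart v ∈ lieU e) => by
        show nilPart (u * v) ∈ lieU e
        rw [mem_lieU_iff] at hu hv ⊢
        rw [nilPart_mul]
        exact add_mem (add_mem (glFilt_antitone (by omega) (mul_mem_glFilt he hu hv)) hu) hv }

@[reducible] def gactMulAction (src tgt : A → I) : MulAction (Gd k d) (CRep src tgt k d) where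
  smul := gact src tgt
  one_smul P := funext fun a => by
    show gact src tgt 1 P a = P a
    simp [gact]
  mul_smul u v P := funext fun a => by
    show gact src tgt (u * v) P a = gact src tgt u (gact src tgt v P) a
    simp [gact, Matrix.mul_assoc]

section Unipotent

variable [Finite k] [Finite I] {he : ∀ i, IsBlockDecomp ν (e · i)}

theorem mem_unipotent {u : Gd k d} : u ∈ unipotent he ↔ nilPart u ∈ glFilt e 1 :=
  mem_lieU_iff

theorem toLieGd_mem_glFilt_zero {u : Gd k d} (hu : u ∈ unipotent he) :
    toLieGd u ∈ glFilt e 0 := by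
  rw [← add_sub_cancel 1 (toLieGd u)]
  exact add_mem (one_mem_glFilt_zero he) (glFilt_antitone (Nat.zero_le 1) (mem_unipotent.1 hu))

theorem ncard_unipotent :
    (unipotent he : Set (Gd k d)).ncard = (glFilt e 1 : Set (LieGd k d)).ncard := by
  refine Set.ncard_congr (fun u _ => nilPart u) (fun u hu => mem_unipotent.1 hu)
    (fun u v _ _ h => nilPart_injective h) fun η hη => ?_
  have hnil : IsNilpotent η := ⟨ν, eq_zero_of_mem_glFilt he (pow_mem_glFilt he hη ν)⟩
  have hunit := Pi.isUnit_iff.1 hnil.isUnit_one_add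
  have hη' : nilPart (fun i => (hunit i).unit) = η :=
    funext fun i => by simp [nilPart, toLieGd]
  exact ⟨fun i => (hunit i).unit, mem_unipotent.2 (by rwa [hη']), hη'⟩

theorem gact_mem_flagReps (hN : IsBlockDiag e N) {u : Gd k d} (hu : u ∈ unipotent he)
    {P : CRep src tgt k d} (hP : P ∈ flagReps e N) : gact src tgt u P ∈ flagReps e N := by
  have hdecomp : gact src tgt u P - N =
      (fun a => toLieGd u (tgt a) * (P - N) a * toLieGd u⁻¹ (src a)) +
        fun a => phi N (nilPart u) a * toLieGd u⁻¹ (src a) := by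
    funext a
    simp only [gact, toLieGd, phi_apply, nilPart, Pi.add_apply, Pi.sub_apply, Pi.inv_apply,
      Pi.one_apply, Matrix.mul_sub, Matrix.sub_mul, Matrix.one_mul, Matrix.mul_assoc,
      Units.mul_inv, Matrix.mul_one]
    abel
  rw [mem_flagReps_iff] at hP ⊢
  rw [hdecomp]
  exact add_mem
    (rmul_mem_repFilt he (lmul_mem_repFilt he (toLieGd_mem_glFilt_zero hu) hP)
      (toLieGd_mem_glFilt_zero (inv_mem hu)))
    (rmul_mem_repFilt he (phi_mem_repFilt he hN (mem_unipotent.1 hu))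
      (toLieGd_mem_glFilt_zero (inv_mem hu)))

end Unipotent

/-- `E` is a complement of `φ(𝔲_d)` in `Y_N`, compatible with the block decomposition. -/
structure IsCompatibleComplement (e : ℕ → LieGd k d) (N : CRep src tgt k d)
    (E : Set (CRep src tgt k d)) : Prop where
  subset_flagReps : E ⊆ flagReps e N
  base_mem : N ∈ E
  add_smul_sub_mem : ∀ P ∈ E, ∀ P' ∈ E, ∀ c : k, N + c • (P - N) + (P' - N) ∈ E
  graded : ∀ P ∈ E, ∀ s t : ℕ, (fun a => N a + e t (tgt a) * (P a - N a) * e s (src a)) ∈ E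
  exists_add_phi : ∀ P ∈ flagReps e N, ∃ Q ∈ E, ∃ ξ ∈ lieU e, P = Q + phi N ξ
  eq_of_add_phi_eq : ∀ Q ∈ E, ∀ Q' ∈ E, ∀ ξ ξ' : LieGd k d, ξ ∈ lieU e → ξ' ∈ lieU e →
    Q + phi N ξ = Q' + phi N ξ' → Q = Q'

namespace IsCompatibleComplement

def direction (hE : IsCompatibleComplement e N E) : AddSubgroup (CRep src tgt k d) where
  carrier := {x | N + x ∈ E}
  add_mem' {x y} hx hy := by simpa [add_assoc] using hE.add_smul_sub_mem _ hx _ hy 1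
  zero_mem' := by simpa using hE.base_mem
  neg_mem' {x} hx := by
    simpa [← sub_eq_add_neg] using hE.add_smul_sub_mem _ hx _ hE.base_mem (-1)

variable (hE : IsCompatibleComplement e N E)
include hE

theorem repProj_sub_mem_direction {Q : CRep src tgt k d} (hQ : Q ∈ E) :
    repProj src tgt ν r e (Q - N) ∈ hE.direction := by
  have h : repProj src tgt ν r e (Q - N) =
      ∑ t ∈ range ν, fun a => e t (tgt a) * (Q a - N a) * e (t + r) (src a) := by
    funext a
    simp only [Finset.sum_apply]
    rfl
  rw [h]
  exact sum_mem fun t _ => hE.graded Q hQ (t + r) t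

theorem eq_zero_of_mem_direction {x : CRep src tgt k d} (hx : x ∈ hE.direction)
    {ξ : LieGd k d} (hξ : ξ ∈ glFilt e 1) (h : x = phi N ξ) : x = 0 := by
  have := hE.eq_of_add_phi_eq _ hx N hE.base_mem 0 ξ (mem_lieU_iff.2 (zero_mem _))
    (mem_lieU_iff.2 hξ) (by rw [map_zero, add_zero, h])
  simpa using this

end IsCompatibleComplement

theorem sub_gact_sub_eq {u : Gd k d} {Q : CRep src tgt k d} :
    (Q - N) - (gact src tgt u Q - N) = -phi N (nilPart u) +
      ((fun a => (gact src tgt u Q - N) a * nilPart u (src a)) -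
        fun a => nilPart u (tgt a) * (Q - N) a) := by
  funext a
  have h : toLieGd u (tgt a) * Q a = gact src tgt u Q a * toLieGd u (src a) := by
    simp only [gact, toLieGd, Matrix.mul_assoc, Units.inv_mul, Matrix.mul_one]
  simp only [nilPart, phi_apply, Pi.add_apply, Pi.sub_apply, Pi.neg_apply, Pi.one_apply,
    Matrix.mul_sub, Matrix.sub_mul, Matrix.mul_one, Matrix.one_mul, ← h]
  abel

section Rigidity

variable (he : ∀ i, IsBlockDecomp ν (e · i)) (hN : IsBlockDiag e N)
  (hφ : Set.InjOn (phi N) (glFilt e 1)) (hE : IsCompatibleComplement e N E)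
include he hN hφ hE

theorem nilPart_mem_glFilt_succ (hr : 1 ≤ r) {u : Gd k d} (hu : nilPart u ∈ glFilt e r)
    {Q : CRep src tgt k d} (hQ : Q ∈ E) (hQ' : gact src tgt u Q ∈ E) :
    nilPart u ∈ glFilt e (r + 1) := by
  have hQN := mem_flagReps_iff.1 (hE.subset_flagReps hQ)
  have hQN' := mem_flagReps_iff.1 (hE.subset_flagReps hQ')
  have hrest := sub_mem (add_comm 1 r ▸ rmul_mem_repFilt he hQN' hu) (lmul_mem_repFilt he hu hQN)
  have hproj : repProj src tgt ν r e (Q - N) - repProj src tgt ν r e (gact src tgt u Q - N) =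
      phi N (-glProj ν r e (nilPart u)) := by
    rw [← map_sub, sub_gact_sub_eq, map_add, map_neg, repProj_phi he hN, repProj_eq_zero hrest,
      add_zero, map_neg]
  have hdeg := glFilt_antitone hr (glProj_mem he (nilPart u))
  have hzero := hE.eq_zero_of_mem_direction (sub_mem (hE.repProj_sub_mem_direction hQ)
    (hE.repProj_sub_mem_direction hQ')) (neg_mem hdeg) hproj
  have hglProj : glProj ν r e (nilPart u) = 0 :=
    hφ hdeg (zero_mem _) (by rw [map_zero, ← neg_eq_zero, ← map_neg, ← hproj, hzero])
  simpa [hglProj] using sub_glProj_mem he hu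

theorem eq_one_of_gact_mem [Finite k] [Finite I] {u : Gd k d} (hu : u ∈ unipotent he)
    {Q : CRep src tgt k d} (hQ : Q ∈ E) (hQ' : gact src tgt u Q ∈ E) : u = 1 := by
  have h : ∀ r, 1 ≤ r → nilPart u ∈ glFilt e r := by
    intro r hr
    induction r, hr using Nat.le_induction with
    | base => exact mem_unipotent.1 hu
    | succ r hr ih => exact nilPart_mem_glFilt_succ he hN hφ hE hr ih hQ hQ'
  apply nilPart_injective
  rw [nilPart_one]
  exact eq_zero_of_mem_glFilt he (glFilt_antitone (le_max_right 1 ν) (h _ (le_max_left 1 ν)))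

theorem ncard_mul_ncard_unipotent [Finite k] [Finite I] :
    E.ncard * (unipotent he : Set (Gd k d)).ncard = (flagReps e N).ncard := by
  rw [ncard_unipotent, ← Set.ncard_prod]
  refine Set.ncard_congr (fun p _ => p.1 + phi N p.2) ?_ ?_ ?_
  · rintro ⟨Q, ξ⟩ ⟨hQ, hξ⟩
    rw [mem_flagReps_iff, add_sub_right_comm]
    exact add_mem (mem_flagReps_iff.1 (hE.subset_flagReps hQ)) (phi_mem_repFilt he hN hξ)
  · rintro ⟨Q, ξ⟩ ⟨Q', ξ'⟩ ⟨hQ, hξ⟩ ⟨hQ', hξ'⟩ h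
    obtain rfl := hE.eq_of_add_phi_eq Q hQ Q' hQ' ξ ξ' (mem_lieU_iff.2 hξ) (mem_lieU_iff.2 hξ') h
    exact Prod.ext rfl (hφ hξ hξ' (add_left_cancel h))
  · intro P hP
    obtain ⟨Q, hQ, ξ, hξ, rfl⟩ := hE.exists_add_phi P hP
    exact ⟨(Q, ξ), ⟨hQ, mem_lieU_iff.1 hξ⟩, rfl⟩

end Rigidity

end Quiver

theorem slice_meets_unipotent_orbits {k : Type} [Field k] [Fintype k]
    {I A : Type} [Fintype I] [Fintype A] (src tgt : A → I)
    (d : I → ℕ) (ν : ℕ) (N : CRep src tgt k d)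
    (e : ℕ → ∀ i : I, Matrix (Fin (d i)) (Fin (d i)) k)
    (hcomplete : ∀ i, ∑ s ∈ Finset.range ν, e s i = 1)
    (hidem : ∀ s i, e s i * e s i = e s i)
    (horth : ∀ s t i, s ≠ t → e s i * e t i = 0)
    (hNdiag : ∀ (a : A) (s t : ℕ), s ≠ t → e t (tgt a) * N a * e s (src a) = 0)
    -- Hom_Q(N_t, N_s) = 0 for s < t, in terms of block-supported morphisms
    (hdirected : ∀ s t : ℕ, s < t →
      ∀ f : ∀ i : I, Matrix (Fin (d i)) (Fin (d i)) k,
        (∀ i, e s i * f i * e t i = f i) →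
        (∀ a : A, f (tgt a) * N a = N a * f (src a)) → f = 0)
    (E : Set (CRep src tgt k d))
    (hEsub : ∀ P ∈ E, ∀ (a : A) (s t : ℕ), s ≤ t →
      e t (tgt a) * (P a - N a) * e s (src a) = 0)
    (hEaff : N ∈ E ∧ ∀ P ∈ E, ∀ P' ∈ E, ∀ c : k, (N + c • (P - N) + (P' - N)) ∈ E)
    (hEgraded : ∀ P ∈ E, ∀ s t : ℕ,
      (fun a => N a + e t (tgt a) * (P a - N a) * e s (src a)) ∈ E)
    (hEspan : ∀ P : CRep src tgt k d,
      (∀ (a : A) (s t : ℕ), s ≤ t → e t (tgt a) * (P a - N a) * e s (src a) = 0) →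
      ∃ Q ∈ E, ∃ ξ : ∀ i : I, Matrix (Fin (d i)) (Fin (d i)) k,
        (∀ (i : I) (s t : ℕ), s ≤ t → e t i * ξ i * e s i = 0) ∧
        P = Q + fun a => ξ (tgt a) * N a - N a * ξ (src a))
    (hEunique : ∀ Q ∈ E, ∀ Q' ∈ E,
      ∀ ξ ξ' : ∀ i : I, Matrix (Fin (d i)) (Fin (d i)) k,
        (∀ (i : I) (s t : ℕ), s ≤ t → e t i * ξ i * e s i = 0) →
        (∀ (i : I) (s t : ℕ), s ≤ t → e t i * ξ' i * e s i = 0) →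
        (Q + fun a => ξ (tgt a) * N a - N a * ξ (src a))
          = (Q' + fun a => ξ' (tgt a) * N a - N a * ξ' (src a)) → Q = Q') :
    -- Y_N and U_d :
    (∀ P ∈ {P : CRep src tgt k d | ∀ (a : A) (s t : ℕ), s ≤ t →
          e t (tgt a) * (P a - N a) * e s (src a) = 0},
      ∃! Q : CRep src tgt k d, Q ∈ E ∧
        ∃ u : Gd k d, (∀ (i : I) (s t : ℕ), s ≤ t →
            e t i * ((u i : Matrix (Fin (d i)) (Fin (d i)) k) - 1) * e s i = 0) ∧
          gact src tgt u P = Q)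
    ∧
    (∀ u : Gd k d, (∀ (i : I) (s t : ℕ), s ≤ t →
        e t i * ((u i : Matrix (Fin (d i)) (Fin (d i)) k) - 1) * e s i = 0) →
      ∀ P ∈ {P : CRep src tgt k d | ∀ (a : A) (s t : ℕ), s ≤ t →
          e t (tgt a) * (P a - N a) * e s (src a) = 0},
        gact src tgt u P = P → u = 1)
    ∧
    E.ncard * {u : Gd k d | ∀ (i : I) (s t : ℕ), s ≤ t →
        e t i * ((u i : Matrix (Fin (d i)) (Fin (d i)) k) - 1) * e s i = 0}.ncard
      = {P : CRep src tgt k d | ∀ (a : A) (s t : ℕ), s ≤ t →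
          e t (tgt a) * (P a - N a) * e s (src a) = 0}.ncard := by
  have he : ∀ i, IsBlockDecomp ν (e · i) :=
    fun i => ⟨⟨fun s => hidem s i, fun s t hst => horth s t i hst⟩, hcomplete i⟩
  have hE : IsCompatibleComplement e N E := ⟨hEsub, hEaff.1, hEaff.2, hEgraded, hEspan, hEunique⟩
  have hφ := injOn_phi he hNdiag hdirected
  have hcard := ncard_mul_ncard_unipotent he hNdiag hφ hE
  let := gactMulAction (k := k) (d := d) src tgt
  obtain ⟨hslice, hfree⟩ := existsUnique_smul_mem_of_ncard_le (U := unipotent he)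
    (Set.toFinite (flagReps e N)) hE.subset_flagReps
    (fun u hu P hP => gact_mem_flagReps hNdiag hu hP)
    (fun u hu Q hQ hQ' => eq_one_of_gact_mem he hNdiag hφ hE hu hQ hQ') hcard.ge
  exact ⟨hslice, hfree, hcard⟩
end
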